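/- Let (X, Σ, μ) be a probability space and f : X → X an ergodic measure-preserving map. Let A be a measurable set with μ(A) > 0, let ρ > 0 and 0 < ε < 1. Then there exists N ≥ 1 such that for every n ≥ N, the set A_{ρ,n} := {x ∈ A : there exists an integer R with n ≤ R ≤ (1+ρ)n and f^R(x) ∈ A} satisfies μ(A_{ρ,n}) ≥ (1 − ε)μ(A). -/

import Mathlib

/-!
By ergodicity the orbit of almost every point enters `A`, so for some `K` all but `ε μ(A)` of
the space enters `A` within `K` steps. Since `f^[n]` preserves `μ`, all but `ε μ(A)` of `A` is
mapped by `f^[n]` into that set; such points return to `A` at a time in `[n, n + K)`, which lies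
in the window `[n, (1 + ρ) n]` once `K ≤ ρ n`.
-/

open MeasureTheory Filter Topology Set

section entersWithin

variable {X : Type*} {f : X → X} {s : Set X}

def entersWithin (f : X → X) (s : Set X) (K : ℕ) : Set X := ⋃ k < K, f^[k] ⁻¹' s

lemma entersWithin_mono : Monotone (entersWithin f s) := fun _ _ hKL =>
  biUnion_mono (fun _ hk => lt_of_lt_of_le hk hKL) fun _ _ => subset_rfl

lemma iUnion_entersWithin : ⋃ K, entersWithin f s K = ⋃ k, f^[k] ⁻¹' s := by
  refine subset_antisymm (iUnion_subset fun K => iUnion₂_subset fun k _ => ?_) ?_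
  · exact subset_iUnion (fun k => f^[k] ⁻¹' s) k
  · exact iUnion_subset fun k => subset_iUnion_of_subset (k + 1) <|
      subset_biUnion_of_mem (u := fun k => f^[k] ⁻¹' s) k.lt_succ_self

lemma mem_preimage_iterate_entersWithin {n K : ℕ} {x : X} :
    x ∈ f^[n] ⁻¹' entersWithin f s K ↔ ∃ R, n ≤ R ∧ R < n + K ∧ f^[R] x ∈ s := by
  simp only [entersWithin, mem_preimage, mem_iUnion, exists_prop]
  constructor
  · rintro ⟨k, hk, hx⟩
    exact ⟨k + n, by omega, by omega, by rwa [Function.iterate_add_apply]⟩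
  · rintro ⟨R, hnR, hRK, hx⟩
    refine ⟨R - n, by omega, ?_⟩
    rwa [← Function.iterate_add_apply, Nat.sub_add_cancel hnR]

variable [MeasurableSpace X]

lemma measurableSet_entersWithin (hf : Measurable f) (hs : MeasurableSet s) (K : ℕ) :
    MeasurableSet (entersWithin f s K) :=
  .iUnion fun k => .iUnion fun _ => hf.iterate k hs

end entersWithin

section

variable {X : Type*} [MeasurableSpace X] {μ : Measure X} {f : X → X} {s : Set X}

lemma MeasureTheory.MeasurePreserving.measure_le_inter_preimage_add_compl
    {Y : Type*} [MeasurableSpace Y] {ν : Measure Y} {g : X → Y} (hg : MeasurePreserving g μ ν)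
    {t : Set Y} (ht : MeasurableSet t) (s : Set X) : μ s ≤ μ (s ∩ g ⁻¹' t) + ν tᶜ :=
  calc μ s ≤ μ (s ∩ g ⁻¹' t) + μ (s \ g ⁻¹' t) := measure_le_inter_add_sdiff _ _ _
    _ ≤ μ (s ∩ g ⁻¹' t) + μ (g ⁻¹' tᶜ) := by gcongr; exact sdiff_subset_compl _ _
    _ = μ (s ∩ g ⁻¹' t) + ν tᶜ := by rw [hg.measure_preimage ht.compl.nullMeasurableSet]

variable [IsFiniteMeasure μ]

lemma Ergodic.iUnion_preimage_iterate_ae_eq_univ (hf : Ergodic f μ) (hs : MeasurableSet s)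
    (h0 : μ s ≠ 0) : (⋃ k, f^[k] ⁻¹' s) =ᵐ[μ] univ := by
  have hU : MeasurableSet (⋃ k, f^[k] ⁻¹' s) := .iUnion fun k => hf.measurable.iterate k hs
  have hinv : f ⁻¹' (⋃ k, f^[k] ⁻¹' s) ⊆ ⋃ k, f^[k] ⁻¹' s := by
    simp only [preimage_iUnion, ← preimage_comp, ← Function.iterate_succ]
    exact iUnion_subset fun k => subset_iUnion (fun k => f^[k] ⁻¹' s) (k + 1)
  refine (hf.ae_empty_or_univ_of_preimage_ae_le hU.nullMeasurableSet
    hinv.eventuallyLE).resolve_left fun hempty => h0 ?_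
  exact measure_mono_null (subset_iUnion (fun k => f^[k] ⁻¹' s) 0) (ae_eq_empty.1 hempty)

lemma Ergodic.tendsto_measure_compl_entersWithin (hf : Ergodic f μ) (hs : MeasurableSet s)
    (h0 : μ s ≠ 0) : Tendsto (fun K => μ (entersWithin f s K)ᶜ) atTop (𝓝 0) := by
  have hlim := tendsto_measure_iInter_atTop (μ := μ)
    (fun K => (measurableSet_entersWithin hf.measurable hs K).compl.nullMeasurableSet)
    (fun _ _ hKL => compl_subset_compl.2 (entersWithin_mono hKL)) ⟨0, measure_ne_top _ _⟩
  rwa [← compl_iUnion, iUnion_entersWithin,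
    ae_eq_univ.1 (hf.iUnion_preimage_iterate_ae_eq_univ hs h0)] at hlim

end

theorem ergodic_return_time_window_general
    {X : Type*} [MeasurableSpace X] (μ : Measure X) [IsProbabilityMeasure μ]
    (f : X → X) (hf : Ergodic f μ)
    (A : Set X) (hA : MeasurableSet A) (hApos : 0 < μ A)
    (ρ ε : ℝ) (hρ : 0 < ρ) (hε : 0 < ε) :
    ∃ N : ℕ, 1 ≤ N ∧ ∀ n : ℕ, N ≤ n →
      ENNReal.ofReal (1 - ε) * μ A ≤
        μ {x | x ∈ A ∧ ∃ R : ℕ, n ≤ R ∧ (R : ℝ) ≤ (1 + ρ) * n ∧ f^[R] x ∈ A} := by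
  have hεA : 0 < ENNReal.ofReal ε * μ A := ENNReal.mul_pos (ENNReal.ofReal_pos.2 hε).ne' hApos.ne'
  obtain ⟨K, hK⟩ :=
    ((hf.tendsto_measure_compl_entersWithin hA hApos.ne').eventually (ge_mem_nhds hεA)).exists
  refine ⟨max 1 ⌈K / ρ⌉₊, le_max_left _ _, fun n hn => ?_⟩
  have hKn : (K : ℝ) ≤ ρ * n := (div_le_iff₀' hρ).1 (Nat.ceil_le.1 (le_of_max_le_right hn))
  have hwindow : A ∩ f^[n] ⁻¹' entersWithin f A K ⊆
      {x | x ∈ A ∧ ∃ R : ℕ, n ≤ R ∧ (R : ℝ) ≤ (1 + ρ) * n ∧ f^[R] x ∈ A} := by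
    rintro x ⟨hxA, hx⟩
    obtain ⟨R, hnR, hRK, hR⟩ := mem_preimage_iterate_entersWithin.1 hx
    have hRK' : (R : ℝ) ≤ n + K := by exact_mod_cast hRK.le
    exact ⟨hxA, R, hnR, by linarith, hR⟩
  calc ENNReal.ofReal (1 - ε) * μ A = μ A - ENNReal.ofReal ε * μ A := by
        rw [ENNReal.ofReal_sub _ hε.le, ENNReal.ofReal_one,
          ENNReal.sub_mul fun _ _ => measure_ne_top μ A, one_mul]
    _ ≤ μ (A ∩ f^[n] ⁻¹' entersWithin f A K) := tsub_le_iff_right.2 <|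
        ((hf.toMeasurePreserving.iterate n).measure_le_inter_preimage_add_compl
          (measurableSet_entersWithin hf.measurable hA K) A).trans (by gcongr)
    _ ≤ _ := measure_mono hwindow

/-- for an ergodic map, most points of a positive-measure set `A`
have a return time to `A` in the window `[n, (1+ρ)n]`, for all large `n`. -/
theorem ergodic_return_time_window
    {X : Type*} [MeasurableSpace X] (μ : Measure X) [IsProbabilityMeasure μ]
    (f : X → X) (hf : Ergodic f μ)
    (A : Set X) (hA : MeasurableSet A) (hApos : 0 < μ A)
    (ρ ε : ℝ) (hρ : 0 < ρ) (hε : 0 < ε) (hε1 : ε < 1) :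
    ∃ N : ℕ, 1 ≤ N ∧ ∀ n : ℕ, N ≤ n →
      ENNReal.ofReal (1 - ε) * μ A ≤
        μ {x | x ∈ A ∧ ∃ R : ℕ, n ≤ R ∧ (R : ℝ) ≤ (1 + ρ) * n ∧ f^[R] x ∈ A} :=
  ergodic_return_time_window_general μ f hf A hA hApos ρ ε hρ hε
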